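/- (Stiff-fluid Tolman orbit.) For the stiff-fluid choice f(Ω) ≡ 1, Υ(Ω) = Ω, σ(Ω) = Ω (corresponding to the equation of state kρc² = 1 + kp with ω = kp), the curve γ(Ω) = (3/(5+Ω), (2+Ω)/(2+3Ω+4Ω²), Ω), Ω ∈ (0,1), is an orbit of the dynamical system: at every point of the curve the vector field F is tangent to the curve, i.e., F(γ(Ω)) is a scalar multiple of γ′(Ω) for every Ω ∈ (0,1). -/

import Mathlib

open Set

/-!
Since `γ(Ω)` has last coordinate `Ω`, the last coordinate of `γ'(Ω)` is `1`, so the only possible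
factor is the last coordinate `-Ω(1-Ω)H` of `F(γ(Ω))`. With that factor the first two coordinates
become identities between rational functions of `Ω`, which hold wherever `5 + Ω ≠ 0` (the
denominator `2 + 3Ω + 4Ω²` has no real root).
-/

/-- `H(U,V,Ω) = (1+σ(Ω))V(1−U+σ(Ω)U)` for the stiff-fluid choice `σ(Ω) = Ω`. -/
noncomputable def HfunStiff (U V W : ℝ) : ℝ :=
  (1 + W) * V * (1 - U + W * U)

/-- The vector field `F` on the cube for the stiff-fluid choice
`f(Ω) ≡ 1`, `Υ(Ω) = Ω`, `σ(Ω) = Ω`. -/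
noncomputable def FfieldStiff (U V W : ℝ) : ℝ × ℝ × ℝ :=
  (U * (1 - U) * ((1 - V) * (3 - 4 * U) - W * HfunStiff U V W),
   V * (1 - V) * ((2 * U - 1) * (1 - V + 2 * W * V) + (1 - W) * HfunStiff U V W),
   -(1 : ℝ) * W * (1 - W) * HfunStiff U V W)

/-- The Tolman curve `γ(Ω) = (3/(5+Ω), (2+Ω)/(2+3Ω+4Ω²), Ω)`. -/
noncomputable def tolmanCurve (W : ℝ) : ℝ × ℝ × ℝ :=
  (3 / (5 + W), (2 + W) / (2 + 3 * W + 4 * W ^ 2), W)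

noncomputable def tolmanCurveDeriv (W : ℝ) : ℝ × ℝ × ℝ :=
  (-3 / (5 + W) ^ 2, -4 * (1 + 4 * W + W ^ 2) / (2 + 3 * W + 4 * W ^ 2) ^ 2, 1)

lemma tolmanDenom_ne_zero (W : ℝ) : 2 + 3 * W + 4 * W ^ 2 ≠ 0 := by
  nlinarith [sq_nonneg (8 * W + 3)]

lemma hasDerivAt_tolmanCurve {W : ℝ} (hW : 5 + W ≠ 0) :
    HasDerivAt tolmanCurve (tolmanCurveDeriv W) W := by
  have hU : HasDerivAt (fun W : ℝ => 3 / (5 + W)) (-3 / (5 + W) ^ 2) W :=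
    ((hasDerivAt_const W 3).div ((hasDerivAt_id' W).const_add 5) hW).congr_deriv (by ring)
  have hV : HasDerivAt (fun W : ℝ => (2 + W) / (2 + 3 * W + 4 * W ^ 2))
      (-4 * (1 + 4 * W + W ^ 2) / (2 + 3 * W + 4 * W ^ 2) ^ 2) W := by
    have hden : HasDerivAt (fun W : ℝ => 2 + 3 * W + 4 * W ^ 2) (3 + 8 * W) W :=
      ((((hasDerivAt_id' W).const_mul 3).const_add 2).add
        ((hasDerivAt_pow 2 W).const_mul 4)).congr_deriv (by ring)
    exact (((hasDerivAt_id' W).const_add 2).div hden (tolmanDenom_ne_zero W)).congr_deriv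
      (by field_simp; ring)
  exact hU.prodMk (hV.prodMk (hasDerivAt_id W))

lemma FfieldStiff_tolmanCurve {W : ℝ} (hW : 5 + W ≠ 0) :
    FfieldStiff (tolmanCurve W).1 (tolmanCurve W).2.1 (tolmanCurve W).2.2 =
      (-W * (1 - W) * HfunStiff (tolmanCurve W).1 (tolmanCurve W).2.1 W) • tolmanCurveDeriv W := by
  have hq := tolmanDenom_ne_zero W
  simp only [tolmanCurve, tolmanCurveDeriv, FfieldStiff, HfunStiff, Prod.smul_mk, smul_eq_mul,
    Prod.mk.injEq]
  -- keep the quadratic denominator atomic so that `field_simp` recognises it as nonzero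
  generalize hq_def : 2 + 3 * W + 4 * W ^ 2 = q at hq ⊢
  refine ⟨?_, ?_, ?_⟩ <;> field_simp <;> subst hq_def <;> ring

/-- For the stiff-fluid system the Tolman curve is an orbit:
at every point of the curve the vector field is a scalar multiple of the
tangent vector of the curve. -/
theorem stmt19 :
    ∀ W ∈ Ioo (0:ℝ) 1,
      ∃ d : ℝ × ℝ × ℝ, ∃ κ : ℝ,
        HasDerivAt tolmanCurve d W ∧
        FfieldStiff (tolmanCurve W).1 (tolmanCurve W).2.1 (tolmanCurve W).2.2 = κ • d := by
  intro W hW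
  have h5 : 5 + W ≠ 0 := by linarith [hW.1]
  exact ⟨_, _, hasDerivAt_tolmanCurve h5, FfieldStiff_tolmanCurve h5⟩
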